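/- Let 0 < δ ≤ 1/2 and let w : (0,1) → (0,∞) satisfy inf_{δ ≤ t ≤ 1−δ} w(t) > 0, lim_{t→0⁺} t^{1/2}/w(t) = 0 and lim_{t→1⁻} (1−t)^{1/2}/w(t) = 0. Let (Q_N) and (B_N) be stochastic processes on (0,1) such that (a) sup_{δ ≤ t ≤ 1−δ}|Q_N(t) − B_N(t)| → 0 in probability for every fixed δ ∈ (0,1/2); (b) sup_{0<t≤δ} |Q_N(t) − B_N(t)|/t^{1/2} and sup_{1−δ≤t<1} |Q_N(t) − B_N(t)|/(1−t)^{1/2} are tight (bounded in probability) uniformly over N and δ. Then sup_{0<t<1} |Q_N(t) − B_N(t)|/w(t) → 0 in probability. -/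
import Mathlib


open MeasureTheory

/-- Gluing a mid-interval approximation with boundary tightness and weight decay:
sup_{0<t<1} |Q_N(t) − B_N(t)|/w(t) → 0 in probability. -/
theorem stmt_19 {Ω : Type*} [MeasurableSpace Ω] (μ : Measure Ω) [IsProbabilityMeasure μ]
    (Q B : ℕ → ℝ → Ω → ℝ) (w : ℝ → ℝ)
    (hw_pos : ∀ δ : ℝ, 0 < δ → δ < 1 / 2 →
      ∃ m > (0 : ℝ), ∀ t ∈ Set.Icc δ (1 - δ), m ≤ w t)
    (hw0 : Filter.Tendsto (fun t => Real.sqrt t / w t)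
      (nhdsWithin 0 (Set.Ioi 0)) (nhds 0))
    (hw1 : Filter.Tendsto (fun t => Real.sqrt (1 - t) / w t)
      (nhdsWithin 1 (Set.Iio 1)) (nhds 0))
    (ha : ∀ δ : ℝ, 0 < δ → δ < 1 / 2 → ∀ e : ℝ, 0 < e →
      Filter.Tendsto
        (fun N => μ {ω | ∃ t ∈ Set.Icc δ (1 - δ), e < |Q N t ω - B N t ω|})
        Filter.atTop (nhds 0))
    (hb : ∀ e : ℝ, 0 < e → ∃ K : ℝ, ∀ N : ℕ, ∀ δ : ℝ, 0 < δ → δ < 1 / 2 →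
      μ {ω | ∃ t, 0 < t ∧ t ≤ δ ∧ K < |Q N t ω - B N t ω| / Real.sqrt t} <
          ENNReal.ofReal e ∧
      μ {ω | ∃ t, 1 - δ ≤ t ∧ t < 1 ∧ K < |Q N t ω - B N t ω| / Real.sqrt (1 - t)} <
          ENNReal.ofReal e) :
    ∀ e : ℝ, 0 < e →
      Filter.Tendsto
        (fun N => μ {ω | ∃ t ∈ Set.Ioo (0 : ℝ) 1, e < |Q N t ω - B N t ω| / w t})
        Filter.atTop (nhds 0) := by
  intro e he
  rw [ENNReal.tendsto_atTop_zero]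
  intro ε hε
  set ε' : ENNReal := min (ε / 3) 1 with hε'def
  have hε'pos : 0 < ε' := lt_min (ENNReal.div_pos hε.ne' (by norm_num)) one_pos
  have hε'ne : ε' ≠ ⊤ := ne_top_of_le_ne_top ENNReal.one_ne_top (min_le_right _ _)
  set r := ε'.toReal with hrdef
  have hr0 : 0 < r := ENNReal.toReal_pos hε'pos.ne' hε'ne
  have hofr : ENNReal.ofReal r = ε' := ENNReal.ofReal_toReal hε'ne
  obtain ⟨K, hK⟩ := hb r hr0
  set K' := max K 1 with hK'def
  have hK'pos : (0:ℝ) < K' := lt_of_lt_of_le one_pos (le_max_right _ _)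
  have heK : 0 < e / K' := div_pos he hK'pos
  obtain ⟨δ1, hδ1, h1⟩ := Metric.tendsto_nhdsWithin_nhds.mp hw0 _ heK
  obtain ⟨δ2, hδ2, h2⟩ := Metric.tendsto_nhdsWithin_nhds.mp hw1 _ heK
  set δ := min (min δ1 δ2 / 2) (1/4) with hδdef
  have hδ0 : 0 < δ := lt_min (by positivity) (by norm_num)
  have hδhalf : δ < 1/2 := lt_of_le_of_lt (min_le_right _ _) (by norm_num)
  have hδδ1 : δ < δ1 := by
    have := min_le_left (min δ1 δ2 / 2) (1/4)
    have h2' := min_le_left δ1 δ2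
    simp only [hδdef]
    nlinarith [min_le_left δ1 δ2, min_le_left (min δ1 δ2 / 2) ((1:ℝ)/4), lt_min hδ1 hδ2]
  have hδδ2 : δ < δ2 := by
    simp only [hδdef]
    nlinarith [min_le_right δ1 δ2, min_le_left (min δ1 δ2 / 2) ((1:ℝ)/4), lt_min hδ1 hδ2]
  obtain ⟨m, hm0, hm⟩ := hw_pos δ hδ0 hδhalf
  have hem : 0 < e * m := mul_pos he hm0
  obtain ⟨N0, hN0⟩ := (ENNReal.tendsto_atTop_zero.mp (ha δ hδ0 hδhalf (e*m) hem)) ε' hε'pos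
  refine ⟨N0, fun n hn => ?_⟩
  have hsub : {ω | ∃ t ∈ Set.Ioo (0:ℝ) 1, e < |Q n t ω - B n t ω| / w t} ⊆
      {ω | ∃ t ∈ Set.Icc δ (1-δ), e*m < |Q n t ω - B n t ω|} ∪
      ({ω | ∃ t, 0 < t ∧ t ≤ δ ∧ K < |Q n t ω - B n t ω| / Real.sqrt t} ∪
       {ω | ∃ t, 1 - δ ≤ t ∧ t < 1 ∧ K < |Q n t ω - B n t ω| / Real.sqrt (1-t)}) := by
    rintro ω ⟨t, ⟨ht0, ht1⟩, hte⟩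
    set q := |Q n t ω - B n t ω| with hq
    have hq0 : 0 ≤ q := abs_nonneg _
    have hwt : 0 < w t := by
      by_contra h
      push_neg at h
      exact absurd hte (not_lt.mpr (le_trans (div_nonpos_of_nonneg_of_nonpos hq0 h) he.le))
    have hqe : e * w t < q := (lt_div_iff₀ hwt).mp hte
    rcases le_or_gt t δ with hle | hgt
    · -- left boundary
      have hst : 0 < Real.sqrt t := Real.sqrt_pos.mpr ht0
      have hd : dist t 0 < δ1 := by
        rw [Real.dist_eq, sub_zero, abs_of_pos ht0]
        exact lt_of_le_of_lt hle hδδ1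
      have h1' := h1 (Set.mem_Ioi.mpr ht0) hd
      rw [Real.dist_eq, sub_zero] at h1'
      have h3 : Real.sqrt t / w t < e / K' := lt_of_le_of_lt (le_abs_self _) h1'
      have h4 : Real.sqrt t * K' < e * w t := (div_lt_div_iff₀ hwt hK'pos).mp h3
      have h5 : K' < q / Real.sqrt t := by
        rw [lt_div_iff₀ hst]
        nlinarith
      exact Or.inr (Or.inl ⟨t, ht0, hle, lt_of_le_of_lt (le_max_left K 1) h5⟩)
    · rcases le_or_gt (1 - δ) t with hle' | hlt'
      · -- right boundary
        have h1t : 0 < 1 - t := by linarith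
        have hst : 0 < Real.sqrt (1 - t) := Real.sqrt_pos.mpr h1t
        have hd : dist t 1 < δ2 := by
          rw [Real.dist_eq, abs_sub_comm, abs_of_pos h1t]
          have : 1 - t ≤ δ := by linarith
          exact lt_of_le_of_lt this hδδ2
        have h2' := h2 (Set.mem_Iio.mpr ht1) hd
        rw [Real.dist_eq, sub_zero] at h2'
        have h3 : Real.sqrt (1-t) / w t < e / K' := lt_of_le_of_lt (le_abs_self _) h2'
        have h4 : Real.sqrt (1-t) * K' < e * w t := (div_lt_div_iff₀ hwt hK'pos).mp h3
        have h5 : K' < q / Real.sqrt (1-t) := by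
          rw [lt_div_iff₀ hst]
          nlinarith
        exact Or.inr (Or.inr ⟨t, hle', ht1, lt_of_le_of_lt (le_max_left K 1) h5⟩)
      · -- middle
        have htI : t ∈ Set.Icc δ (1-δ) := ⟨hgt.le, hlt'.le⟩
        have hmw : m ≤ w t := hm t htI
        have : e * m ≤ e * w t := mul_le_mul_of_nonneg_left hmw he.le
        exact Or.inl ⟨t, htI, lt_of_le_of_lt this hqe⟩
  have hA := hN0 n hn
  obtain ⟨hC, hD⟩ := hK n δ hδ0 hδhalf
  rw [hofr] at hC hD
  calc μ {ω | ∃ t ∈ Set.Ioo (0:ℝ) 1, e < |Q n t ω - B n t ω| / w t}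
      ≤ μ ({ω | ∃ t ∈ Set.Icc δ (1-δ), e*m < |Q n t ω - B n t ω|} ∪
      ({ω | ∃ t, 0 < t ∧ t ≤ δ ∧ K < |Q n t ω - B n t ω| / Real.sqrt t} ∪
       {ω | ∃ t, 1 - δ ≤ t ∧ t < 1 ∧ K < |Q n t ω - B n t ω| / Real.sqrt (1-t)})) :=
        measure_mono hsub
    _ ≤ μ {ω | ∃ t ∈ Set.Icc δ (1-δ), e*m < |Q n t ω - B n t ω|} +
        (μ {ω | ∃ t, 0 < t ∧ t ≤ δ ∧ K < |Q n t ω - B n t ω| / Real.sqrt t} +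
         μ {ω | ∃ t, 1 - δ ≤ t ∧ t < 1 ∧ K < |Q n t ω - B n t ω| / Real.sqrt (1-t)}) :=
        le_trans (measure_union_le _ _) (add_le_add le_rfl (measure_union_le _ _))
    _ ≤ ε' + (ε' + ε') := add_le_add hA (add_le_add hC.le hD.le)
    _ ≤ ε / 3 + (ε / 3 + ε / 3) := by
        have h := min_le_left (ε / 3) (1 : ENNReal)
        exact add_le_add h (add_le_add h h)
    _ = ε := by
        rw [ENNReal.div_add_div_same, ENNReal.div_add_div_same]
        have : ε + (ε + ε) = 3 * ε := by ring
        rw [this, mul_div_assoc, ENNReal.mul_div_cancel' (by norm_num) (by norm_num)]
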